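/- For any real payoff vectors P00, P01, P10, P11 ∈ ℝ² and any λ00, λ01, λ11 ≥ 0 with λ00 + λ01 + λ11 = 1 and λ01 < 1, the EWL payoff vector at the profile (U(0,0,0), U(2·arccos√(1−λ01), arccos√(λ00/(1−λ01)), 0)) equals λ00·P00 + λ01·P01 + λ11·P11. -/

import Mathlib

open Real

/-- The EWL payoff vector for a 2×2 bimatrix game with payoff vectors
`P00 P01 P10 P11 : ℝ × ℝ`, at the profile `(U(θ1,α1,β1), U(θ2,α2,β2))`. -/
noncomputable def ewlV (P00 P01 P10 P11 : ℝ × ℝ) (θ1 α1 β1 θ2 α2 β2 : ℝ) : ℝ × ℝ :=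
  ((cos (α1 + α2) * cos (θ1/2) * cos (θ2/2) +
    sin (β1 + β2) * sin (θ1/2) * sin (θ2/2))^2) • P00 +
  ((sin (α2 - β1) * sin (θ1/2) * cos (θ2/2) +
    cos (α1 - β2) * cos (θ1/2) * sin (θ2/2))^2) • P01 +
  ((cos (α2 - β1) * sin (θ1/2) * cos (θ2/2) +
    sin (α1 - β2) * cos (θ1/2) * sin (θ2/2))^2) • P10 +
  ((cos (β1 + β2) * sin (θ1/2) * sin (θ2/2) -
    sin (α1 + α2) * cos (θ1/2) * cos (θ2/2))^2) • P11

/-!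
Against the identity strategy `U(0,0,0)`, the strategy `U(2a, b, 0)` puts weight
`cos² a cos² b`, `sin² a`, `0`, `cos² a sin² b` on the four outcomes. Choosing
`cos² a = 1 - λ01` and `cos² b = λ00 / (1 - λ01)` makes these weights `λ00, λ01, 0, λ11`.
-/

theorem ewlV_identity_left (P00 P01 P10 P11 : ℝ × ℝ) (a b : ℝ) :
    ewlV P00 P01 P10 P11 0 0 0 (2 * a) b 0 =
      (cos a * cos b) ^ 2 • P00 + sin a ^ 2 • P01 + (cos a * sin b) ^ 2 • P11 := by
  have hhalf : 2 * a / 2 = a := by ring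
  simp only [ewlV, hhalf, zero_div, zero_add, add_zero, sub_zero, cos_zero, sin_zero,
    mul_zero, zero_mul, mul_one, one_mul, zero_sub, ne_eq, OfNat.ofNat_ne_zero,
    not_false_eq_true, zero_pow, zero_smul]
  module

theorem cos_arccos_sqrt_sq {x : ℝ} (h0 : 0 ≤ x) (h1 : x ≤ 1) : cos (arccos √x) ^ 2 = x := by
  rw [cos_arccos (by linarith [sqrt_nonneg x]) (sqrt_le_one.mpr h1), sq_sqrt h0]

theorem sin_arccos_sqrt_sq {x : ℝ} (h0 : 0 ≤ x) (h1 : x ≤ 1) :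
    sin (arccos √x) ^ 2 = 1 - x := by
  rw [sin_sq, cos_arccos_sqrt_sq h0 h1]

/-- A suitable two-parameter EWL strategy profile realizes any convex
combination `λ00·P00 + λ01·P01 + λ11·P11` of three pure payoff vectors. -/
theorem ewl_convex_combination_00_01_11 (P00 P01 P10 P11 : ℝ × ℝ)
    (l00 l01 l11 : ℝ) (h00 : 0 ≤ l00) (h01 : 0 ≤ l01) (h11 : 0 ≤ l11)
    (hsum : l00 + l01 + l11 = 1) (hlt : l01 < 1) :
    ewlV P00 P01 P10 P11
      0 0 0
      (2 * Real.arccos (Real.sqrt (1 - l01)))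
      (Real.arccos (Real.sqrt (l00 / (1 - l01)))) 0 =
      l00 • P00 + l01 • P01 + l11 • P11 := by
  have hpos : 0 < 1 - l01 := by linarith
  have hr0 : 0 ≤ l00 / (1 - l01) := div_nonneg h00 hpos.le
  have hr1 : l00 / (1 - l01) ≤ 1 := (div_le_one hpos).mpr (by linarith)
  have hl11 : (1 - l01) * (1 - l00 / (1 - l01)) = l11 := by
    field_simp
    linarith
  rw [ewlV_identity_left, mul_pow, mul_pow, cos_arccos_sqrt_sq hpos.le (by linarith),
    sin_arccos_sqrt_sq hpos.le (by linarith), cos_arccos_sqrt_sq hr0 hr1,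
    sin_arccos_sqrt_sq hr0 hr1, mul_div_cancel₀ _ hpos.ne', sub_sub_cancel, hl11]
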